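/- arXiv:2602.18247 — 9 statements merged into one kernel-verified Lean document; each statement's English description precedes it below -/
import Mathlib

section
/- Let ū > 0 and let u, h ∈ ℝ with |h| ≤ ū. Then sat_ū(u) lies in the convex hull of {u, h}; that is, there exists δ ∈ [0,1] such that sat_ū(u) = δ·u + (1−δ)·h. -/
/-- Saturation function with level `ubar`. -/
noncomputable def sat (ubar u : ℝ) : ℝ := max (-ubar) (min ubar u)

/-- For `ū > 0` and `|h| ≤ ū`, the saturation `sat ū u` lies in the
convex hull of `{u, h}`: there is `δ ∈ [0,1]` with `sat ū u = δ·u + (1-δ)·h`. -/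
theorem sat_mem_convexHull (ubar u h : ℝ) (hubar : 0 < ubar) (hh : |h| ≤ ubar) :
    ∃ δ ∈ Set.Icc (0 : ℝ) 1, sat ubar u = δ * u + (1 - δ) * h := by
  obtain ⟨hh1, hh2⟩ := abs_le.mp hh
  rcases le_or_gt u (-ubar) with h1 | h1
  · -- sat = -ubar, u ≤ -ubar ≤ h
    have hs : sat ubar u = -ubar := by
      have : min ubar u = u := min_eq_right (le_trans h1 (by linarith))
      simp [sat, this, max_eq_left h1]
    rcases eq_or_lt_of_le (le_trans h1 hh1) with he | hlt
    · exact ⟨0, ⟨le_refl 0, zero_le_one⟩, by rw [hs]; linarith⟩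
    · have hd : u - h < 0 := by linarith
      refine ⟨(-ubar - h) / (u - h), ⟨?_, ?_⟩, ?_⟩
      · exact div_nonneg_iff.mpr (Or.inr ⟨by linarith, by linarith⟩)
      · rw [div_le_one_iff]; exact Or.inr (Or.inr ⟨hd, by linarith⟩)
      · have hne : u - h ≠ 0 := ne_of_lt hd
        rw [hs]; field_simp; ring
  · rcases le_or_gt u ubar with h2 | h2
    · have hs : sat ubar u = u := by
        have : min ubar u = u := min_eq_right h2
        simp [sat, this, max_eq_right h1.le]
      exact ⟨1, ⟨zero_le_one, le_refl 1⟩, by rw [hs]; ring⟩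
    · have hs : sat ubar u = ubar := by
        have : min ubar u = ubar := min_eq_left h2.le
        simp [sat, this, max_eq_right (by linarith : -ubar ≤ ubar)]
      have hd : 0 < u - h := by linarith
      refine ⟨(ubar - h) / (u - h), ⟨?_, ?_⟩, ?_⟩
      · apply div_nonneg <;> linarith
      · rw [div_le_one hd]; linarith
      · rw [hs]; field_simp; ring
end

section
/- Let ū > 0 and let u, h ∈ ℝ with |h| ≤ ū. Then there exists δ ∈ [0,1] such that dz_ū(u) = δ·(u − h). -/
/-- Deadzone function with level `ubar`. -/
noncomputable def dz (ubar u : ℝ) : ℝ := u - sat ubar u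

/-- For `ū > 0` and `|h| ≤ ū`, there exists `δ ∈ [0,1]` such that
`dz ū u = δ·(u − h)`. -/
theorem dz_eq_delta_mul (ubar u h : ℝ) (hubar : 0 < ubar) (hh : |h| ≤ ubar) :
    ∃ δ ∈ Set.Icc (0 : ℝ) 1, dz ubar u = δ * (u - h) := by
  obtain ⟨h1, h2⟩ := abs_le.mp hh
  rcases le_or_gt u ubar with hu1 | hu1
  · rcases le_or_gt (-ubar) u with hu2 | hu2
    · -- saturated region: dz = 0
      refine ⟨0, ⟨le_refl 0, zero_le_one⟩, ?_⟩
      simp [dz, sat, min_eq_right hu1, max_eq_right hu2]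
    · -- u < -ubar
      have hd : u - h < 0 := by linarith
      refine ⟨(u + ubar) / (u - h), ⟨?_, ?_⟩, ?_⟩
      · exact div_nonneg_iff.mpr (Or.inr ⟨by linarith, by linarith⟩)
      · rw [div_le_one_iff]; exact Or.inr (Or.inr ⟨hd, by linarith⟩)
      · have hmin : min ubar u = u := min_eq_right (by linarith)
        have hmax : max (-ubar) u = -ubar := max_eq_left (by linarith)
        rw [dz, sat, hmin, hmax, div_mul_eq_mul_div, eq_div_iff hd.ne]
        ring
  · -- u > ubar
    have hd : 0 < u - h := by linarith
    refine ⟨(u - ubar) / (u - h), ⟨?_, ?_⟩, ?_⟩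
    · apply div_nonneg <;> linarith
    · rw [div_le_one hd]; linarith
    · have hmin : min ubar u = ubar := min_eq_left (by linarith)
      rw [dz, sat, hmin, max_eq_right (by linarith : -ubar ≤ ubar),
        div_mul_eq_mul_div, eq_div_iff hd.ne']
end

section
/- Let m ∈ ℕ, and for each j ∈ {1,…,m} let ū_j > 0, d_j > 0, and u_j, h_j ∈ ℝ with |h_j| ≤ ū_j. Then Σ_{j=1}^m d_j · dz_{ū_j}(u_j) · (u_j − h_j − dz_{ū_j}(u_j)) ≥ 0. (This is the multivariable generalized sector condition 2·p_uᵀU⁻¹(u − Hx − p_u) ≥ 0 with diagonal multiplier U ≻ 0, where p_u is the componentwise deadzone of u.) -/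
lemma dz_term_nonneg (ubar u h : ℝ) (hu : 0 < ubar) (hh : |h| ≤ ubar) :
    0 ≤ dz ubar u * (u - h - dz ubar u) := by
  have h1 : -ubar ≤ h := (abs_le.mp hh).1
  have h2 : h ≤ ubar := (abs_le.mp hh).2
  rcases le_or_gt u (-ubar) with hc | hc
  · have : sat ubar u = -ubar := by
      unfold sat; rw [min_eq_right (by linarith), max_eq_left (by linarith)]
    unfold dz; rw [this]; nlinarith
  rcases le_or_gt ubar u with hc2 | hc2
  · have : sat ubar u = ubar := by
      unfold sat; rw [min_eq_left hc2, max_eq_right (by linarith)]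
    unfold dz; rw [this]; nlinarith
  · have : sat ubar u = u := by
      unfold sat; rw [min_eq_right hc2.le, max_eq_right hc.le]
    unfold dz; rw [this]; ring_nf; simp

/-- Multivariable generalized sector condition: with positive
diagonal multipliers `d j`, saturation levels `ū j > 0` and `|h j| ≤ ū j`,
`Σ_j d j · dz (ū j) (u j) · (u j − h j − dz (ū j) (u j)) ≥ 0`. -/
theorem deadzone_sector_sum (m : ℕ) (ubar d u h : Fin m → ℝ)
    (hubar : ∀ j, 0 < ubar j) (hd : ∀ j, 0 < d j) (hh : ∀ j, |h j| ≤ ubar j) :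
    0 ≤ ∑ j, d j * dz (ubar j) (u j) * (u j - h j - dz (ubar j) (u j)) := by
  apply Finset.sum_nonneg
  intro j _
  rw [mul_assoc]
  exact mul_nonneg (hd j).le (dz_term_nonneg _ _ _ (hubar j) (hh j))
end

section
/- Let P be a symmetric positive definite n×n real matrix, s > 0, ū > 0, and h ∈ ℝⁿ. Then the ellipsoid {x ∈ ℝⁿ : xᵀPx ≤ s²} is contained in the slab {x ∈ ℝⁿ : |hᵀx| ≤ ū} if and only if s²·(hᵀP⁻¹h) ≤ ū². -/
open Matrix

/-!
Since `P` is symmetric, `hᵀx = (P⁻¹h)ᵀ P x`, so Cauchy–Schwarz for the inner product defined by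
`P` gives `(hᵀx)² ≤ (hᵀP⁻¹h)(xᵀPx)`. Hence `|hᵀx| ≤ s √(hᵀP⁻¹h)` on the ellipsoid, with equality
at its boundary point `x = (s / √(hᵀP⁻¹h)) P⁻¹h`.
-/

namespace Matrix

variable {ι : Type*} [Fintype ι]

theorem PosSemidef.sq_dotProduct_mulVec_le {P : Matrix ι ι ℝ} (hP : P.PosSemidef) (x y : ι → ℝ) :
    (x ⬝ᵥ P *ᵥ y) ^ 2 ≤ (x ⬝ᵥ P *ᵥ x) * (y ⬝ᵥ P *ᵥ y) := by
  let _ := P.toSeminormedAddCommGroup hP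
  let _ := P.toInnerProductSpace hP
  have hinner : ∀ u v : ι → ℝ, inner ℝ u v = u ⬝ᵥ P *ᵥ v := fun u v => by
    show (P *ᵥ v) ⬝ᵥ star u = _
    rw [star_trivial, dotProduct_comm]
  simpa only [sq, hinner] using real_inner_mul_inner_self_le x y

variable [DecidableEq ι]

theorem mulVec_inv_mulVec_of_isUnit_det {R : Type*} [CommRing R] {P : Matrix ι ι R}
    (hP : IsUnit P.det) (h : ι → R) : P *ᵥ (P⁻¹ *ᵥ h) = h := by
  rw [mulVec_mulVec, mul_nonsing_inv P hP, one_mulVec]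

theorem inv_mulVec_dotProduct_mulVec_inv_mulVec {R : Type*} [CommRing R] {P : Matrix ι ι R}
    (hP : IsUnit P.det) (h : ι → R) :
    P⁻¹ *ᵥ h ⬝ᵥ P *ᵥ (P⁻¹ *ᵥ h) = h ⬝ᵥ P⁻¹ *ᵥ h := by
  rw [mulVec_inv_mulVec_of_isUnit_det hP, dotProduct_comm]

theorem PosDef.sq_dotProduct_le {P : Matrix ι ι ℝ} (hP : P.PosDef) (h x : ι → ℝ) :
    (h ⬝ᵥ x) ^ 2 ≤ (h ⬝ᵥ P⁻¹ *ᵥ h) * (x ⬝ᵥ P *ᵥ x) := by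
  have hdet : IsUnit P.det := hP.det_pos.ne'.isUnit
  have hPy : P *ᵥ (P⁻¹ *ᵥ h) = h := mulVec_inv_mulVec_of_isUnit_det hdet h
  have hsymm : P⁻¹ *ᵥ h ⬝ᵥ P *ᵥ x = h ⬝ᵥ x := by
    have hPt : Pᵀ = P := conjTranspose_eq_transpose_of_trivial P ▸ hP.isHermitian.eq
    rw [dotProduct_mulVec, ← mulVec_transpose, hPt, hPy]
  simpa only [hsymm, inv_mulVec_dotProduct_mulVec_inv_mulVec hdet] using
    hP.posSemidef.sq_dotProduct_mulVec_le (P⁻¹ *ᵥ h) x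

end Matrix

theorem ellipsoid_subset_slab_iff_general (n : ℕ) (P : Matrix (Fin n) (Fin n) ℝ)
    (hP : P.PosDef) (s ubar : ℝ) (hubar : 0 < ubar) (h : Fin n → ℝ) :
    {x : Fin n → ℝ | x ⬝ᵥ P *ᵥ x ≤ s ^ 2} ⊆ {x : Fin n → ℝ | |h ⬝ᵥ x| ≤ ubar} ↔
      s ^ 2 * (h ⬝ᵥ P⁻¹ *ᵥ h) ≤ ubar ^ 2 := by
  set a := h ⬝ᵥ P⁻¹ *ᵥ h
  have ha : 0 ≤ a := by simpa only [star_trivial] using hP.inv.posSemidef.dotProduct_mulVec_nonneg h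
  constructor
  · intro hsub
    obtain ha0 | hapos := ha.eq_or_lt
    · rw [← ha0, mul_zero]
      positivity
    set c := s / √a
    have hc : c ^ 2 * a = s ^ 2 := by
      rw [div_pow, Real.sq_sqrt ha, div_mul_cancel₀ _ hapos.ne']
    have hmem : c • (P⁻¹ *ᵥ h) ⬝ᵥ P *ᵥ (c • (P⁻¹ *ᵥ h)) ≤ s ^ 2 := by
      rw [mulVec_smul, smul_dotProduct, dotProduct_smul,
        inv_mulVec_dotProduct_mulVec_inv_mulVec hP.det_pos.ne'.isUnit, smul_eq_mul, smul_eq_mul]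
      exact le_of_eq (by linear_combination hc)
    have hslab : |c * a| ≤ ubar := by
      simpa only [Set.mem_ofPred_eq, dotProduct_smul, smul_eq_mul] using hsub hmem
    calc s ^ 2 * a = |c * a| ^ 2 := by rw [sq_abs, ← hc]; ring
      _ ≤ ubar ^ 2 := pow_le_pow_left₀ (abs_nonneg _) hslab 2
  · intro hle x hx
    refine abs_le_of_sq_le_sq ?_ hubar.le
    calc (h ⬝ᵥ x) ^ 2 ≤ a * (x ⬝ᵥ P *ᵥ x) := hP.sq_dotProduct_le h x
      _ ≤ a * s ^ 2 := mul_le_mul_of_nonneg_left hx ha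
      _ ≤ ubar ^ 2 := by linarith

/-- For a symmetric positive definite `P`, `s > 0`, `ū > 0` and `h ∈ ℝⁿ`,
the ellipsoid `{x : xᵀPx ≤ s²}` is contained in the slab `{x : |hᵀx| ≤ ū}` iff
`s²·(hᵀP⁻¹h) ≤ ū²`. -/
theorem ellipsoid_subset_slab_iff (n : ℕ) (P : Matrix (Fin n) (Fin n) ℝ)
    (hP : P.PosDef) (s ubar : ℝ) (hs : 0 < s) (hubar : 0 < ubar) (h : Fin n → ℝ) :
    {x : Fin n → ℝ | x ⬝ᵥ P *ᵥ x ≤ s ^ 2} ⊆ {x : Fin n → ℝ | |h ⬝ᵥ x| ≤ ubar} ↔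
      s ^ 2 * (h ⬝ᵥ P⁻¹ *ᵥ h) ≤ ubar ^ 2 :=
  ellipsoid_subset_slab_iff_general n P hP s ubar hubar h
end

section
/- Let P be a symmetric positive definite n×n real matrix, s > 0, ū > 0, and h ∈ ℝⁿ. Then the ellipsoid {x ∈ ℝⁿ : xᵀPx ≤ s²} is contained in the slab {x ∈ ℝⁿ : |hᵀx| ≤ ū} if and only if the matrix (ū²/s²)·P − h·hᵀ is positive semidefinite, where h·hᵀ denotes the rank-one outer product. -/
/-!
Both conditions say that the quadratic inequality `s² (hᵀx)² ≤ ū² xᵀPx` holds for every `x`.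
For positive semidefiniteness this is the expansion `xᵀ(c P - h hᵀ)x = c xᵀPx - (hᵀx)²`.
For the inclusion, both sides are homogeneous of degree 2 in `x`, so it suffices to check the
inequality on the boundary `xᵀPx = s²` of the ellipsoid, to which every `x ≠ 0` can be rescaled
because `P` is positive definite.
-/

open Matrix

variable {ι : Type*} [Fintype ι]

lemma dotProduct_vecMulVec_self_mulVec (h x : ι → ℝ) :
    x ⬝ᵥ vecMulVec h h *ᵥ x = (h ⬝ᵥ x) ^ 2 := by
  rw [vecMulVec_mulVec, op_smul_eq_smul, dotProduct_smul, smul_eq_mul,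
    dotProduct_comm, sq]

lemma posSemidef_smul_sub_vecMulVec_self_iff {P : Matrix ι ι ℝ} (hP : P.IsHermitian) (c : ℝ)
    (h : ι → ℝ) :
    (c • P - vecMulVec h h).PosSemidef ↔ ∀ x, (h ⬝ᵥ x) ^ 2 ≤ c * (x ⬝ᵥ P *ᵥ x) := by
  have hh : (vecMulVec h h).IsHermitian := by
    simpa using (posSemidef_vecMulVec_self_star h).isHermitian
  have hHerm : (c • P - vecMulVec h h).IsHermitian := (hP.smul (IsSelfAdjoint.all c)).sub hh
  simp only [posSemidef_iff_dotProduct_mulVec, hHerm, true_and, star_trivial, sub_mulVec,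
    dotProduct_sub, smul_mulVec, dotProduct_smul, smul_eq_mul, dotProduct_vecMulVec_self_mulVec,
    sub_nonneg]

lemma sq_dotProduct_le_of_ellipsoid_subset_slab {P : Matrix ι ι ℝ} (hP : P.PosDef) {s ubar : ℝ}
    (hs : 0 < s) {h : ι → ℝ}
    (hsub : {x | x ⬝ᵥ P *ᵥ x ≤ s ^ 2} ⊆ {x | |h ⬝ᵥ x| ≤ ubar}) (x : ι → ℝ) :
    (h ⬝ᵥ x) ^ 2 ≤ ubar ^ 2 / s ^ 2 * (x ⬝ᵥ P *ᵥ x) := by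
  rcases eq_or_ne x 0 with rfl | hx
  · simp
  set q := x ⬝ᵥ P *ᵥ x
  have hq : 0 < q := by simpa using hP.dotProduct_mulVec_pos hx
  set t := s / √q
  have ht : t ^ 2 * q = s ^ 2 := by
    rw [div_pow, Real.sq_sqrt hq.le, div_mul_cancel₀ _ hq.ne']
  have hmem : |t * (h ⬝ᵥ x)| ≤ ubar := by
    have hbdry : (t • x) ⬝ᵥ P *ᵥ (t • x) = s ^ 2 := by
      rw [mulVec_smul, dotProduct_smul, smul_dotProduct, smul_eq_mul, smul_eq_mul, ← ht]; ring
    simpa only [Set.mem_ofPred_eq, dotProduct_smul, smul_eq_mul] using hsub hbdry.le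
  have hsq : (t * (h ⬝ᵥ x)) ^ 2 ≤ ubar ^ 2 := by
    rw [← sq_abs]; exact pow_le_pow_left₀ (abs_nonneg _) hmem 2
  rw [div_mul_eq_mul_div, le_div_iff₀ (by positivity)]
  calc (h ⬝ᵥ x) ^ 2 * s ^ 2 = (t * (h ⬝ᵥ x)) ^ 2 * q := by rw [← ht]; ring
    _ ≤ ubar ^ 2 * q := by gcongr

/-- For a symmetric positive definite `P`, `s > 0`, `ū > 0` and `h ∈ ℝⁿ`,
the ellipsoid `{x : xᵀPx ≤ s²}` is contained in the slab `{x : |hᵀx| ≤ ū}` iff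
`(ū²/s²)·P − h·hᵀ` is positive semidefinite. -/
theorem ellipsoid_subset_slab_iff_posSemidef (n : ℕ) (P : Matrix (Fin n) (Fin n) ℝ)
    (hP : P.PosDef) (s ubar : ℝ) (hs : 0 < s) (hubar : 0 < ubar) (h : Fin n → ℝ) :
    {x : Fin n → ℝ | x ⬝ᵥ P *ᵥ x ≤ s ^ 2} ⊆ {x : Fin n → ℝ | |h ⬝ᵥ x| ≤ ubar} ↔
      ((ubar ^ 2 / s ^ 2) • P - vecMulVec h h).PosSemidef := by
  rw [posSemidef_smul_sub_vecMulVec_self_iff hP.isHermitian]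
  refine ⟨sq_dotProduct_le_of_ellipsoid_subset_slab hP hs, fun hbound x hx => ?_⟩
  refine abs_le_of_sq_le_sq ?_ hubar.le
  calc (h ⬝ᵥ x) ^ 2 ≤ ubar ^ 2 / s ^ 2 * (x ⬝ᵥ P *ᵥ x) := hbound x
    _ ≤ ubar ^ 2 / s ^ 2 * s ^ 2 := by gcongr; exact hx
    _ = ubar ^ 2 := div_mul_cancel₀ _ (by positivity)
end

section
/- Let R, S be symmetric n×n real matrices such that the 2n×2n block matrix [[R, I],[I, S]] is positive definite. Then the matrix I − R·S is invertible. -/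
open Matrix

/-! Positive definite matrices are invertible, and right-multiplying `[[R, 1], [1, S]]` by the
invertible swap `[[0, 1], [1, 0]]` gives `[[1, R], [S, 1]]`, whose determinant is `det (1 - R S)`
by the Schur complement formula. -/

namespace Matrix

variable {k l m n α : Type*} [Fintype m] [Fintype n] [DecidableEq m] [DecidableEq n]

theorem fromBlocks_mul_fromBlocks_zero_one_one_zero [NonAssocSemiring α] (A : Matrix l m α)
    (B : Matrix l n α) (C : Matrix k m α) (D : Matrix k n α) :
    fromBlocks A B C D * (fromBlocks 0 1 1 0 : Matrix (m ⊕ n) (n ⊕ m) α) =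
      fromBlocks B A D C := by
  simp [fromBlocks_multiply]

variable [CommRing α]

theorem isUnit_fromBlocks_zero_one_one_zero :
    IsUnit (fromBlocks 0 1 1 0 : Matrix (n ⊕ n) (n ⊕ n) α) :=
  .of_mul_eq_one (fromBlocks 0 1 1 0) <| by
    rw [fromBlocks_mul_fromBlocks_zero_one_one_zero, fromBlocks_one]

theorem isUnit_one_sub_mul_of_isUnit_fromBlocks {A D : Matrix n n α}
    (h : IsUnit (fromBlocks A 1 1 D)) : IsUnit (1 - A * D) := by
  have hswapped : IsUnit (fromBlocks 1 A D 1) := by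
    rw [← fromBlocks_mul_fromBlocks_zero_one_one_zero]
    exact h.mul isUnit_fromBlocks_zero_one_one_zero
  rw [isUnit_iff_isUnit_det, ← det_fromBlocks_one₂₂]
  exact (isUnit_iff_isUnit_det _).mp hswapped

end Matrix

theorem one_sub_mul_isUnit_of_blocks_posDef_general (n : ℕ) (R S : Matrix (Fin n) (Fin n) ℝ)
    (hpos : (fromBlocks R (1 : Matrix (Fin n) (Fin n) ℝ)
      (1 : Matrix (Fin n) (Fin n) ℝ) S).PosDef) :
    IsUnit ((1 : Matrix (Fin n) (Fin n) ℝ) - R * S) :=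
  isUnit_one_sub_mul_of_isUnit_fromBlocks hpos.isUnit

/-- If the block matrix `[[R, I],[I, S]]` is positive definite
(with `R`, `S` symmetric), then `I − R·S` is invertible. -/
theorem one_sub_mul_isUnit_of_blocks_posDef (n : ℕ) (R S : Matrix (Fin n) (Fin n) ℝ)
    (hR : R.IsSymm) (hS : S.IsSymm)
    (hpos : (fromBlocks R (1 : Matrix (Fin n) (Fin n) ℝ)
      (1 : Matrix (Fin n) (Fin n) ℝ) S).PosDef) :
    IsUnit ((1 : Matrix (Fin n) (Fin n) ℝ) - R * S) :=
  one_sub_mul_isUnit_of_blocks_posDef_general n R S hpos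
end

section
/- Let R, S, M, N be n×n real matrices with R and S symmetric, M and N invertible, and M·Nᵀ = I − R·S. Then the matrix Nᵀ·R·M⁻ᵀ is symmetric, where M⁻ᵀ denotes the inverse of Mᵀ. -/
open Matrix

/-- If `R`, `S` are symmetric, `M`, `N` invertible and
`M·Nᵀ = I − R·S`, then `Nᵀ·R·M⁻ᵀ` is symmetric. -/
theorem NtRMinvT_isSymm (n : ℕ) (R S M N : Matrix (Fin n) (Fin n) ℝ)
    (hR : R.IsSymm) (hS : S.IsSymm) (hM : IsUnit M) (hN : IsUnit N)
    (hMN : M * Nᵀ = 1 - R * S) :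
    (Nᵀ * R * (Mᵀ)⁻¹).IsSymm := by
  have hMd : IsUnit M.det := (Matrix.isUnit_iff_isUnit_det M).mp hM
  have hMTd : IsUnit Mᵀ.det := by rwa [Matrix.det_transpose]
  have h2 : N * Mᵀ = 1 - S * R := by
    have := congrArg Matrix.transpose hMN
    simpa [Matrix.transpose_mul, hR.eq, hS.eq] using this
  have key : M * Nᵀ * R = R * (N * Mᵀ) := by
    rw [hMN, h2, Matrix.sub_mul, Matrix.mul_sub, Matrix.mul_assoc]
    simp
  unfold Matrix.IsSymm
  rw [Matrix.transpose_mul, Matrix.transpose_mul, Matrix.transpose_nonsing_inv,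
    Matrix.transpose_transpose, Matrix.transpose_transpose, hR.eq]
  -- goal: M⁻¹ * (R * N) = Nᵀ * R * Mᵀ⁻¹
  calc M⁻¹ * (R * N)
      = M⁻¹ * (R * (N * Mᵀ)) * Mᵀ⁻¹ := by
        rw [Matrix.mul_assoc, Matrix.mul_assoc, Matrix.mul_assoc,
          Matrix.mul_nonsing_inv _ hMTd, Matrix.mul_one]
    _ = M⁻¹ * (M * Nᵀ * R) * Mᵀ⁻¹ := by rw [key]
    _ = Nᵀ * R * Mᵀ⁻¹ := by
        rw [Matrix.mul_assoc M, ← Matrix.mul_assoc M⁻¹ M,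
          Matrix.nonsing_inv_mul _ hMd, Matrix.one_mul]
end

section
/- Let R, S, M, N be n×n real matrices with R and S symmetric, M and N invertible, and M·Nᵀ = I − R·S. Define Z₁ := [[R, I],[Mᵀ, 0]] and P := [[S, N],[Nᵀ, −Nᵀ·R·M⁻ᵀ]]. Then Z₁ᵀ·P·Z₁ = [[R, I],[I, S]]; consequently, if the block matrix [[R, I],[I, S]] is positive definite, then P is positive definite. -/
/-! Both facts rest on the congruence `Z₁ᵀ P Z₁`. The top-left block collapses to `R` because
`M Nᵀ = I - RS` and its transpose `N Mᵀ = I - SR` (this is where the symmetry of `R` and `S`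
enters) cancel the term `M Nᵀ R M⁻ᵀ Mᵀ = M Nᵀ R`. Since `Z₁` is invertible whenever `M` is, with
inverse `[[0, M⁻ᵀ], [I, -R M⁻ᵀ]]`, positive definiteness transfers from `Z₁ᵀ P Z₁` back to `P`. -/

open Matrix

namespace Matrix
variable {m α : Type*} [Fintype m] [DecidableEq m] [CommRing α]

theorem transpose_fromBlocks_mul_fromBlocks_mul_fromBlocks {R S M N : Matrix m m α}
    (hR : R.IsSymm) (hS : S.IsSymm) (hM : IsUnit M) (hMN : M * Nᵀ = 1 - R * S) :
    (fromBlocks R 1 Mᵀ 0)ᵀ * fromBlocks S N Nᵀ (-(Nᵀ * R * (Mᵀ)⁻¹)) * fromBlocks R 1 Mᵀ 0 =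
      fromBlocks R 1 1 S := by
  have hNM : N * Mᵀ = 1 - S * R := by
    simpa [transpose_mul, hR.eq, hS.eq] using congrArg transpose hMN
  have hMT : (Mᵀ)⁻¹ * Mᵀ = 1 :=
    nonsing_inv_mul _ ((isUnit_iff_isUnit_det _).mp ((isUnit_transpose M).mpr hM))
  rw [fromBlocks_transpose, hR.eq, transpose_one, transpose_zero, transpose_transpose,
    fromBlocks_multiply, fromBlocks_multiply]
  congr 1
  · calc (R * S + M * Nᵀ) * R + (R * N + M * -(Nᵀ * R * (Mᵀ)⁻¹)) * Mᵀ
        = (R * S + M * Nᵀ) * R + R * (N * Mᵀ) - M * Nᵀ * R * ((Mᵀ)⁻¹ * Mᵀ) := by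
          noncomm_ring
      _ = R := by rw [hMT, hNM, hMN]; noncomm_ring
  · rw [hMN]; noncomm_ring
  · simp [hNM]
  · noncomm_ring

theorem isUnit_fromBlocks_one_zero {A C : Matrix m m α} (hC : IsUnit C) :
    IsUnit (fromBlocks A (1 : Matrix m m α) C 0) := by
  have hCinv : C * C⁻¹ = 1 := mul_nonsing_inv _ ((isUnit_iff_isUnit_det C).mp hC)
  refine IsUnit.of_mul_eq_one (fromBlocks 0 C⁻¹ 1 (-(A * C⁻¹))) ?_
  rw [fromBlocks_multiply, ← fromBlocks_one]
  congr 1 <;> simp [hCinv]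

end Matrix

theorem Z1t_P_Z1_eq_and_posDef_general (n : ℕ) (R S M N : Matrix (Fin n) (Fin n) ℝ)
    (hR : R.IsSymm) (hS : S.IsSymm) (hM : IsUnit M)
    (hMN : M * Nᵀ = 1 - R * S) :
    (fromBlocks R 1 Mᵀ 0)ᵀ * (fromBlocks S N Nᵀ (-(Nᵀ * R * (Mᵀ)⁻¹))) *
        (fromBlocks R 1 Mᵀ 0) =
      fromBlocks R 1 1 S ∧
    ((fromBlocks R (1 : Matrix (Fin n) (Fin n) ℝ) 1 S).PosDef →
      (fromBlocks S N Nᵀ (-(Nᵀ * R * (Mᵀ)⁻¹))).PosDef) := by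
  have key := transpose_fromBlocks_mul_fromBlocks_mul_fromBlocks hR hS hM hMN
  refine ⟨key, fun hQ => ?_⟩
  rw [← key, ← conjTranspose_eq_transpose_of_trivial, ← star_eq_conjTranspose] at hQ
  have hZ := isUnit_fromBlocks_one_zero (A := R) ((isUnit_transpose M).mpr hM)
  exact hZ.posDef_star_left_conjugate_iff.mp hQ

/-- With `R`, `S` symmetric, `M`, `N` invertible and
`M·Nᵀ = I − R·S`, for `Z₁ = [[R, I],[Mᵀ, 0]]` and
`P = [[S, N],[Nᵀ, −NᵀRM⁻ᵀ]]` we have `Z₁ᵀ·P·Z₁ = [[R, I],[I, S]]`; consequently,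
if `[[R, I],[I, S]]` is positive definite then so is `P`. -/
theorem Z1t_P_Z1_eq_and_posDef (n : ℕ) (R S M N : Matrix (Fin n) (Fin n) ℝ)
    (hR : R.IsSymm) (hS : S.IsSymm) (hM : IsUnit M) (hN : IsUnit N)
    (hMN : M * Nᵀ = 1 - R * S) :
    (fromBlocks R 1 Mᵀ 0)ᵀ * (fromBlocks S N Nᵀ (-(Nᵀ * R * (Mᵀ)⁻¹))) *
        (fromBlocks R 1 Mᵀ 0) =
      fromBlocks R 1 1 S ∧
    ((fromBlocks R (1 : Matrix (Fin n) (Fin n) ℝ) 1 S).PosDef →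
      (fromBlocks S N Nᵀ (-(Nᵀ * R * (Mᵀ)⁻¹))).PosDef) :=
  Z1t_P_Z1_eq_and_posDef_general n R S M N hR hS hM hMN
end

section
/- Let A, A_k, R, S, M, N be n×n real matrices, B₂ an n×m matrix, C₂ a p×n matrix, B_k an n×p matrix, C_k an m×n matrix, and D_k an m×p matrix. Define the closed-loop matrix A_cl := [[A + B₂·D_k·C₂, B₂·C_k],[B_k·C₂, A_k]] (a 2n×2n block matrix) and the transformed controller variables Â := S·A·R + S·B₂·D_k·C₂·R + N·B_k·C₂·R + S·B₂·C_k·Mᵀ + N·A_k·Mᵀ, B̂ := S·B₂·D_k + N·B_k, Ĉ := D_k·C₂·R + C_k·Mᵀ, D̂ := D_k. Then the congruence identity [[I, 0],[S, N]] · A_cl · [[R, I],[Mᵀ, 0]] = [[A·R + B₂·Ĉ, A + B₂·D̂·C₂],[Â, S·A + B̂·C₂]] holds. -/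
open Matrix

/-- Linearizing change of controller variables. With the
closed-loop state matrix `A_cl = [[A + B₂D_kC₂, B₂C_k],[B_kC₂, A_k]]` and the
transformed variables `Â, B̂, Ĉ, D̂`, the congruence identity
`[[I,0],[S,N]] · A_cl · [[R,I],[Mᵀ,0]]
  = [[AR + B₂Ĉ, A + B₂D̂C₂],[Â, SA + B̂C₂]]` holds. -/
theorem controller_change_of_variables (n m p : ℕ)
    (A Ak R S M N : Matrix (Fin n) (Fin n) ℝ)
    (B₂ : Matrix (Fin n) (Fin m) ℝ) (C₂ : Matrix (Fin p) (Fin n) ℝ)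
    (Bk : Matrix (Fin n) (Fin p) ℝ) (Ck : Matrix (Fin m) (Fin n) ℝ)
    (Dk : Matrix (Fin m) (Fin p) ℝ) :
    (fromBlocks 1 0 S N) *
        (fromBlocks (A + B₂ * Dk * C₂) (B₂ * Ck) (Bk * C₂) Ak) *
        (fromBlocks R 1 Mᵀ 0) =
      fromBlocks
        (A * R + B₂ * (Dk * C₂ * R + Ck * Mᵀ))
        (A + B₂ * Dk * C₂)
        (S * A * R + S * B₂ * Dk * C₂ * R + N * Bk * C₂ * R +
          S * B₂ * Ck * Mᵀ + N * Ak * Mᵀ)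
        (S * A + (S * B₂ * Dk + N * Bk) * C₂) := by
  simp only [fromBlocks_multiply, Matrix.mul_add, Matrix.add_mul, Matrix.one_mul,
    Matrix.mul_one, Matrix.zero_mul, Matrix.mul_zero, Matrix.mul_assoc,
    add_zero, zero_add]
  congr 1 <;> abel
end
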